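/- arXiv:2308.09562 — 4 statements merged into one kernel-verified Lean document; each statement's English description precedes it below -/
import Mathlib

section
/- For every integer p ≥ 11, setting k* = ⌊p/2⌋ − 1, for every integer k with 1 ≤ k ≤ p one has C(p,k)·(k*)² ≤ C(p,k*)·k²; that is, the maximum of C(p,k)/k² over k ∈ {1,…,p} is attained at k* = ⌊p/2 − 1⌋. -/
/-!
Write `f k = C(p,k)/k²`. From `C(p,k+1)(k+1) = C(p,k)(p-k)` one gets
`f (k+1) (k+1)³ = f k (p-k) k²`, so `f` increases at `k` exactly when `(k+1)³ ≤ (p-k) k²`.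
This holds while `2k+4 ≤ p` (for `k = 3` only once `p ≥ 11`) and reverses once
`p ≤ 2k+3`, so `f` is unimodal on `k ≥ 1` with its peak at `⌊p/2⌋ - 1`.
-/

open Set

/-- `C(p,k)/k²`; at `k = 0` it is the junk value `0`. -/
noncomputable def chooseDivSq (p k : ℕ) : ℚ := p.choose k / k ^ 2

lemma chooseDivSq_succ_mul (p : ℕ) {k : ℕ} (hk : k ≠ 0) :
    chooseDivSq p (k + 1) * (k + 1) ^ 3 = chooseDivSq p k * ((p - k : ℕ) * k ^ 2) := by
  have hrec : (p.choose (k + 1) : ℚ) * (k + 1) = p.choose k * (p - k : ℕ) := by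
    exact_mod_cast Nat.choose_succ_right_eq p k
  unfold chooseDivSq
  field_simp
  push_cast at hrec ⊢
  linear_combination ((k + 1) ^ 2 : ℚ) * hrec

lemma chooseDivSq_le_succ {p k : ℕ} (hk : k ≠ 0) (h : (k + 1) ^ 3 ≤ (p - k) * k ^ 2) :
    chooseDivSq p k ≤ chooseDivSq p (k + 1) := by
  have hf : 0 ≤ chooseDivSq p k := by unfold chooseDivSq; positivity
  have h' : ((k + 1 : ℕ) : ℚ) ^ 3 ≤ (p - k : ℕ) * k ^ 2 := by exact_mod_cast h
  push_cast at h'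
  refine le_of_mul_le_mul_right ?_ (by positivity : (0 : ℚ) < (k + 1) ^ 3)
  rw [chooseDivSq_succ_mul p hk]
  exact mul_le_mul_of_nonneg_left h' hf

lemma chooseDivSq_succ_le {p k : ℕ} (hk : k ≠ 0) (h : (p - k) * k ^ 2 ≤ (k + 1) ^ 3) :
    chooseDivSq p (k + 1) ≤ chooseDivSq p k := by
  have hf : 0 ≤ chooseDivSq p k := by unfold chooseDivSq; positivity
  have h' : ((p - k : ℕ) : ℚ) * k ^ 2 ≤ ((k + 1 : ℕ) : ℚ) ^ 3 := by exact_mod_cast h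
  push_cast at h'
  refine le_of_mul_le_mul_right ?_ (by positivity : (0 : ℚ) < (k + 1) ^ 3)
  rw [chooseDivSq_succ_mul p hk]
  exact mul_le_mul_of_nonneg_left h' hf

lemma succ_pow_three_le_sub_mul_sq {p k : ℕ} (hk : 1 ≤ k) (hp : 11 ≤ p) (h : 2 * k + 4 ≤ p) :
    (k + 1) ^ 3 ≤ (p - k) * k ^ 2 := by
  rcases le_or_gt k 3 with hk3 | hk3
  · interval_cases k <;> omega
  · calc (k + 1) ^ 3 ≤ (k + 4) * k ^ 2 := by nlinarith
      _ ≤ (p - k) * k ^ 2 := Nat.mul_le_mul_right _ (by omega)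

lemma sub_mul_sq_le_succ_pow_three {p k : ℕ} (h : p ≤ 2 * k + 3) :
    (p - k) * k ^ 2 ≤ (k + 1) ^ 3 :=
  calc (p - k) * k ^ 2 ≤ (k + 3) * k ^ 2 := Nat.mul_le_mul_right _ (by omega)
    _ ≤ (k + 1) ^ 3 := by nlinarith

lemma monotoneOn_chooseDivSq {p : ℕ} (hp : 11 ≤ p) :
    MonotoneOn (chooseDivSq p) (Icc 1 (p / 2 - 1)) :=
  monotoneOn_of_le_add_one ordConnected_Icc fun _ _ ha ha' =>
    chooseDivSq_le_succ (by grind) (succ_pow_three_le_sub_mul_sq ha.1 hp (by grind))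

lemma antitoneOn_chooseDivSq {p : ℕ} (hp : 4 ≤ p) :
    AntitoneOn (chooseDivSq p) (Ici (p / 2 - 1)) :=
  antitoneOn_of_add_one_le ordConnected_Ici fun _ _ ha _ =>
    chooseDivSq_succ_le (by grind) (sub_mul_sq_le_succ_pow_three (by grind))

theorem stmt_3_general (p k : ℕ) (hp : 11 ≤ p) (hk1 : 1 ≤ k) :
    p.choose k * (p / 2 - 1) ^ 2 ≤ p.choose (p / 2 - 1) * k ^ 2 := by
  have hm : 1 ≤ p / 2 - 1 := by omega
  have hle : chooseDivSq p k ≤ chooseDivSq p (p / 2 - 1) := by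
    rcases le_total k (p / 2 - 1) with h | h
    · exact monotoneOn_chooseDivSq hp ⟨hk1, h⟩ ⟨hm, le_rfl⟩ h
    · exact antitoneOn_chooseDivSq (by omega) self_mem_Ici h h
  unfold chooseDivSq at hle
  rw [div_le_div_iff₀ (by positivity) (by positivity)] at hle
  exact_mod_cast hle

/-- For every integer p ≥ 11, setting k* = ⌊p/2⌋ − 1, for every integer k with
1 ≤ k ≤ p one has C(p,k)·(k*)² ≤ C(p,k*)·k²; that is, the maximum of C(p,k)/k²
over k ∈ {1,…,p} is attained at k* = ⌊p/2 − 1⌋. -/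
theorem stmt_3 (p k : ℕ) (hp : 11 ≤ p) (hk1 : 1 ≤ k) (hkp : k ≤ p) :
    p.choose k * (p / 2 - 1) ^ 2 ≤ p.choose (p / 2 - 1) * k ^ 2 :=
  stmt_3_general p k hp hk1
end

section
/- For every integer p ≥ 11, the integer k = ⌊p/2⌋ − 1 is the unique integer with 2 ≤ k ≤ p satisfying both p·k² < 2k³ + 3k² + 3k + 1 and p·(k−1)² > k³ + (k−1)³. -/
/-! Both inequalities compare `p * j ^ 2` with `j ^ 3 + (j + 1) ^ 3 = j ^ 2 (2j + 3) + (3j + 1)`.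
Once `j ≥ 4` the remainder `3j + 1` is smaller than `j ^ 2`, so `p * j ^ 2` lies below this sum
exactly when `p ≤ 2j + 3` and above it exactly when `p ≥ 2j + 4`. The first inequality (at `j = k`)
and the second (at `j = k - 1`) thus pin `p` to `{2k + 2, 2k + 3}`, i.e. `k = ⌊p/2⌋ - 1`; the
hypothesis `p ≥ 11` excludes `k ≤ 3`, and `k = 4` forces `p = 11`. -/

theorem mul_sq_lt_two_mul_cube_add_iff {p k : ℕ} (hk : 4 ≤ k) :
    p * k ^ 2 < 2 * k ^ 3 + 3 * k ^ 2 + 3 * k + 1 ↔ p ≤ 2 * k + 3 := by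
  constructor
  · intro h
    by_contra! hp
    nlinarith [Nat.mul_le_mul_right (k ^ 2) (show 2 * k + 4 ≤ p by omega)]
  · intro hp
    nlinarith [Nat.mul_le_mul_right (k ^ 2) hp]

theorem add_cube_lt_mul_sq_iff {p j : ℕ} (hj : 4 ≤ j) :
    (j + 1) ^ 3 + j ^ 3 < p * j ^ 2 ↔ 2 * j + 4 ≤ p := by
  constructor
  · intro h
    by_contra! hp
    nlinarith [Nat.mul_le_mul_right (j ^ 2) (show p ≤ 2 * j + 3 by omega)]
  · intro hp
    nlinarith [Nat.mul_le_mul_right (j ^ 2) hp]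

/-- For every integer p ≥ 11, the integer k = ⌊p/2⌋ − 1 is the unique integer with
2 ≤ k ≤ p satisfying both p·k² < 2k³ + 3k² + 3k + 1 and p·(k−1)² > k³ + (k−1)³. -/
theorem stmt_9 (p : ℕ) (hp : 11 ≤ p) :
    ∀ k : ℕ,
      (2 ≤ k ∧ k ≤ p ∧ p * k ^ 2 < 2 * k ^ 3 + 3 * k ^ 2 + 3 * k + 1 ∧
        p * (k - 1) ^ 2 > k ^ 3 + (k - 1) ^ 3) ↔ k = p / 2 - 1 := by
  intro k
  constructor
  · rintro ⟨hk2, -, hA, hB⟩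
    have hk4 : 4 ≤ k := by
      by_contra! hk
      interval_cases k <;> omega
    have hpk := (mul_sq_lt_two_mul_cube_add_iff hk4).1 hA
    obtain rfl | hk5 := hk4.eq_or_lt
    · omega
    obtain ⟨j, rfl⟩ : ∃ j, k = j + 1 := ⟨k - 1, by omega⟩
    have := (add_cube_lt_mul_sq_iff (p := p) (by omega : 4 ≤ j)).1 (by simpa using hB)
    omega
  · rintro rfl
    refine ⟨by omega, by omega, (mul_sq_lt_two_mul_cube_add_iff (by omega)).2 (by omega), ?_⟩
    obtain ⟨j, hj⟩ : ∃ j, p / 2 - 1 = j + 1 := ⟨p / 2 - 2, by omega⟩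
    rw [hj, Nat.add_sub_cancel, gt_iff_lt]
    obtain rfl | hj4 : j = 3 ∨ 4 ≤ j := by omega
    · omega
    · exact (add_cube_lt_mul_sq_iff hj4).2 (by omega)
end

section
/- For all integers j ≥ 1 and α ≥ j + 1: if α ≤ j + 3 then C(α−1, j) < (j+1)², while if α ≥ j + 4 then C(α−1, j) ≥ (j+1)², with equality in the second case if and only if j = 1 and α = 5. -/
/-!
Since `C(n, j)` is monotone in `n`, both parts reduce to the boundary values
`C(j + 2, j) = (j + 1)(j + 2)/2 < (j + 1)²` and `C(j + 3, j) = (j + 1)(j + 2)(j + 3)/6`,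
which exceeds `(j + 1)²` by `(j + 1) j (j - 1)/6`, zero only for `j = 1`. Beyond `n = j + 3`
the growth is strict, so equality forces `α - 1 = j + 3`.
-/

namespace Nat

theorem choose_lt_succ {n k : ℕ} (hk : 0 < k) (hkn : k ≤ n) :
    n.choose k < (n + 1).choose k := by
  obtain ⟨k, rfl⟩ := exists_eq_add_one_of_ne_zero hk.ne'
  rw [choose_succ_succ']
  have : 0 < n.choose k := choose_pos (by omega)
  omega

theorem two_mul_choose_add_two (j : ℕ) : 2 * (j + 2).choose j = (j + 1) * (j + 2) := by
  have h := ascFactorial_eq_factorial_mul_choose j 2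
  rw [← choose_symm_add] at h
  norm_num [ascFactorial_succ, factorial] at h
  linarith

theorem six_mul_choose_add_three (j : ℕ) :
    6 * (j + 3).choose j = (j + 1) * (j + 2) * (j + 3) := by
  have h := ascFactorial_eq_factorial_mul_choose j 3
  rw [← choose_symm_add] at h
  norm_num [ascFactorial_succ, factorial] at h
  linarith

theorem choose_add_two_lt_sq {j : ℕ} (hj : 1 ≤ j) : (j + 2).choose j < (j + 1) ^ 2 := by
  nlinarith [two_mul_choose_add_two j]

theorem sq_le_choose_add_three (j : ℕ) : (j + 1) ^ 2 ≤ (j + 3).choose j := by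
  nlinarith [six_mul_choose_add_three j, Nat.mul_le_mul_left (j + 1) (le_mul_self j)]

theorem sq_lt_choose_add_three {j : ℕ} (hj : 2 ≤ j) : (j + 1) ^ 2 < (j + 3).choose j := by
  nlinarith [six_mul_choose_add_three j, Nat.mul_le_mul_left (j + 1) (Nat.mul_le_mul_right j hj)]

theorem choose_add_three_eq_sq_iff {j : ℕ} : (j + 3).choose j = (j + 1) ^ 2 ↔ j ≤ 1 := by
  refine ⟨fun heq => ?_, fun hj => by interval_cases j <;> rfl⟩
  by_contra! hj
  exact (sq_lt_choose_add_three hj).ne' heq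

end Nat

theorem stmt_13_general (j α : ℕ) (hj : 1 ≤ j) :
    (α ≤ j + 3 → (α - 1).choose j < (j + 1) ^ 2) ∧
    (j + 4 ≤ α →
      (j + 1) ^ 2 ≤ (α - 1).choose j ∧
      ((α - 1).choose j = (j + 1) ^ 2 ↔ j = 1 ∧ α = 5)) := by
  refine ⟨fun hα => ?_, fun hα => ⟨?_, ?_⟩⟩
  · exact (Nat.choose_le_choose j (by omega)).trans_lt (Nat.choose_add_two_lt_sq hj)
  · exact (Nat.sq_le_choose_add_three j).trans (Nat.choose_le_choose j (by omega))
  · obtain rfl | hα := hα.eq_or_lt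
    · rw [show j + 4 - 1 = j + 3 from rfl, Nat.choose_add_three_eq_sq_iff]
      omega
    · have hlt : (j + 1) ^ 2 < (α - 1).choose j :=
        calc (j + 1) ^ 2 ≤ (j + 3).choose j := Nat.sq_le_choose_add_three j
          _ < (j + 4).choose j := Nat.choose_lt_succ hj (by omega)
          _ ≤ (α - 1).choose j := Nat.choose_le_choose j (by omega)
      omega

/-- For all integers j ≥ 1 and α ≥ j + 1: if α ≤ j + 3 then C(α−1, j) < (j+1)²,
while if α ≥ j + 4 then C(α−1, j) ≥ (j+1)², with equality in the second case iff
j = 1 and α = 5. -/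
theorem stmt_13 (j α : ℕ) (hj : 1 ≤ j) (hα : j + 1 ≤ α) :
    (α ≤ j + 3 → (α - 1).choose j < (j + 1) ^ 2) ∧
    (j + 4 ≤ α →
      (j + 1) ^ 2 ≤ (α - 1).choose j ∧
      ((α - 1).choose j = (j + 1) ^ 2 ↔ j = 1 ∧ α = 5)) :=
  stmt_13_general j α hj
end

section
/- For every integer p ≥ 18, setting k* = ⌊p/2 − 5/4⌋ = ⌊(2p − 5)/4⌋, one has C(p,k)·(k*)³ ≤ C(p,k*)·k³ for every integer k with 1 ≤ k ≤ p; that is, the maximum of C(p,k)/k³ over k ∈ {1,…,p} is attained at k* = ⌊p/2 − 5/4⌋. -/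
/-!
Write `f k = C(p,k) / k³`. Pascal's rule `C(p,k+1)(k+1) = C(p,k)(p-k)` gives
`f (k+1) / f k = (p-k) k³ / (k+1)⁴`, which is at least `1` while `2k + 5 ≤ p` (for `p ≥ 18`)
and at most `1` once `p ≤ 2k + 4`. So `f` rises up to the unique `k*` with
`2k* + 3 ≤ p ≤ 2k* + 4`, which is `⌊(2p - 5)/4⌋`, and falls after it.
-/

def binomOverCube (p k : ℕ) : ℚ := p.choose k / k ^ 3

lemma binomOverCube_succ {p k : ℕ} (hk : k ≠ 0) :
    binomOverCube p (k + 1) = binomOverCube p k * ((p - k : ℕ) * k ^ 3 / (k + 1) ^ 4) := by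
  have h : ((p.choose (k + 1) : ℕ) : ℚ) * (k + 1) = p.choose k * (p - k : ℕ) := by
    exact_mod_cast Nat.choose_succ_right_eq p k
  unfold binomOverCube
  field_simp
  push_cast
  linear_combination (k + 1 : ℚ) ^ 3 * h

lemma binomOverCube_nonneg (p k : ℕ) : 0 ≤ binomOverCube p k := by
  unfold binomOverCube; positivity

lemma binomOverCube_le_succ {p k : ℕ} (hk : k ≠ 0) (h : (k + 1) ^ 4 ≤ (p - k) * k ^ 3) :
    binomOverCube p k ≤ binomOverCube p (k + 1) := by
  rw [binomOverCube_succ hk]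
  refine le_mul_of_one_le_right (binomOverCube_nonneg p k) ((one_le_div (by positivity)).2 ?_)
  exact_mod_cast h

lemma binomOverCube_succ_le {p k : ℕ} (hk : k ≠ 0) (h : (p - k) * k ^ 3 ≤ (k + 1) ^ 4) :
    binomOverCube p (k + 1) ≤ binomOverCube p k := by
  rw [binomOverCube_succ hk]
  refine mul_le_of_le_one_right (binomOverCube_nonneg p k) ((div_le_one (by positivity)).2 ?_)
  exact_mod_cast h

lemma succ_pow_four_le_sub_mul_cube {p k : ℕ} (hp : 18 ≤ p) (hk : 0 < k) (hkp : 2 * k + 5 ≤ p) :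
    (k + 1) ^ 4 ≤ (p - k) * k ^ 3 := by
  -- `p - k ≥ k + 5` suffices for `k ≥ 7`; for `k ≤ 6` the bound `p ≥ 18` is needed (tight at `k = 6`).
  obtain ⟨d, rfl⟩ : ∃ d, p = k + d := ⟨p - k, by omega⟩
  rw [Nat.add_sub_cancel_left]
  rcases le_or_gt k 6 with h | h
  · interval_cases k <;> nlinarith
  · nlinarith [pow_pos hk 3, sq_nonneg k]

lemma sub_mul_cube_le_succ_pow_four {p k : ℕ} (hkp : p ≤ 2 * k + 4) :
    (p - k) * k ^ 3 ≤ (k + 1) ^ 4 :=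
  calc (p - k) * k ^ 3 ≤ (k + 4) * k ^ 3 := Nat.mul_le_mul_right _ (by omega)
    _ ≤ (k + 1) ^ 4 := by nlinarith [sq_nonneg k]

lemma binomOverCube_monotoneOn {p m : ℕ} (hp : 18 ≤ p) (hm : 2 * m + 3 ≤ p) :
    MonotoneOn (binomOverCube p) (Set.Icc 1 m) := by
  refine monotoneOn_of_le_succ Set.ordConnected_Icc fun k _ hk hk' ↦ ?_
  simp only [Order.succ_eq_add_one, Set.mem_Icc] at hk hk' ⊢
  exact binomOverCube_le_succ (by omega) (succ_pow_four_le_sub_mul_cube hp (by omega) (by omega))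

lemma binomOverCube_antitoneOn {p m : ℕ} (hm0 : m ≠ 0) (hm : p ≤ 2 * m + 4) :
    AntitoneOn (binomOverCube p) (Set.Ici m) := by
  refine antitoneOn_of_succ_le Set.ordConnected_Ici fun k _ hk _ ↦ ?_
  simp only [Order.succ_eq_add_one, Set.mem_Ici] at hk ⊢
  exact binomOverCube_succ_le (by omega) (sub_mul_cube_le_succ_pow_four (by omega))

lemma binomOverCube_isMaxOn {p m : ℕ} (hp : 18 ≤ p) (hm0 : m ≠ 0)
    (hm : 2 * m + 3 ≤ p) (hm' : p ≤ 2 * m + 4) :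
    IsMaxOn (binomOverCube p) (Set.Ici 1) m := by
  intro k (hk : 1 ≤ k)
  rcases le_total k m with hkm | hmk
  · exact binomOverCube_monotoneOn hp hm ⟨by omega, hkm⟩ ⟨by omega, le_rfl⟩ hkm
  · exact binomOverCube_antitoneOn hm0 hm' Set.self_mem_Ici hmk hmk

theorem stmt_18_general (p k : ℕ) (hp : 18 ≤ p) (hk1 : 1 ≤ k) :
    p.choose k * ((2 * p - 5) / 4) ^ 3 ≤ p.choose ((2 * p - 5) / 4) * k ^ 3 := by
  set m := (2 * p - 5) / 4
  have hpeak : binomOverCube p k ≤ binomOverCube p m :=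
    binomOverCube_isMaxOn hp (by omega) (by omega) (by omega) (Set.mem_Ici.2 hk1)
  unfold binomOverCube at hpeak
  have hk : (0 : ℚ) < k := by exact_mod_cast hk1
  have hm : (0 : ℚ) < m := by exact_mod_cast (show 0 < m by omega)
  rw [div_le_div_iff₀ (by positivity) (by positivity)] at hpeak
  exact_mod_cast hpeak

/-- For every integer p ≥ 18, setting k* = ⌊p/2 − 5/4⌋ = ⌊(2p − 5)/4⌋, one has
C(p,k)·(k*)³ ≤ C(p,k*)·k³ for every integer k with 1 ≤ k ≤ p; that is, the
maximum of C(p,k)/k³ over k ∈ {1,…,p} is attained at k* = ⌊p/2 − 5/4⌋. -/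
theorem stmt_18 (p k : ℕ) (hp : 18 ≤ p) (hk1 : 1 ≤ k) (hkp : k ≤ p) :
    p.choose k * ((2 * p - 5) / 4) ^ 3 ≤ p.choose ((2 * p - 5) / 4) * k ^ 3 :=
  stmt_18_general p k hp hk1
end
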